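/- Let Ω be a σ-compact, locally compact Hausdorff space, 𝒜 a linear space of continuous real-valued functions on Ω separating points, and ℱ the complete lattice cone generated by 𝒜. Then for every f ∈ ℱ, the map f ∘ Φ⁻¹ on Φ(Ω) extends to a function in the complete lattice cone G of functions on 𝒜* generated by the evaluation functionals a* ↦ a*(a), a ∈ 𝒜; and consequently, for every subset S ⊆ Ω, clConv_ℱ S = Φ⁻¹(clConv_G Φ(S)), where Φ(ω)(a) = a(ω) is the Gelfand transform. -/

import Mathlib

open Filter Topology Set

/-- A complete lattice cone of `(-∞,∞]`-valued functions: a convex cone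
stable under pointwise suprema of arbitrary families. -/
def IsCLC {X : Type} (K : Set (X → EReal)) : Prop :=
  (∀ f ∈ K, ∀ g ∈ K, ∀ α β : ℝ, 0 ≤ α → 0 ≤ β →
    (fun x => (α : EReal) * f x + (β : EReal) * g x) ∈ K) ∧
  ∀ (ι : Type) (F : ι → X → EReal), (∀ i, F i ∈ K) → (fun x => ⨆ i, F i x) ∈ K

/-- The complete lattice cone generated by a family of real-valued functions. -/
def genCLC {X : Type} (A : Set (X → ℝ)) : Set (X → EReal) :=
  ⋂₀ {K | IsCLC K ∧ ∀ a ∈ A, (fun x => ((a x : ℝ) : EReal)) ∈ K}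

/-- The Gelfand transform `Φ(ω)(a) = a(ω)`, valued in the continuous (for the
compact-open topology on `𝒜 ⊆ C(Ω,ℝ)`) linear functionals on `𝒜`. -/
def PhiMap {Ω : Type} [TopologicalSpace Ω] (A : Submodule ℝ C(Ω, ℝ)) (ω : Ω) :
    A →L[ℝ] ℝ where
  toFun a := (a : C(Ω, ℝ)) ω
  map_add' a b := rfl
  map_smul' c a := rfl
  cont := (ContinuousEvalConst.continuous_eval_const ω).comp continuous_subtype_val

/-!
Evaluation at `a` is the function `h ↦ h a` on `𝒜*`, and it pulls back along `Φ` to `a`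
itself.
Precomposition with any map `φ` commutes with nonnegative combinations and pointwise suprema, so
the complete lattice cone generated by the pulled-back generators is exactly the pullback of the
complete lattice cone generated by the original ones. The closed-convex-hull identity is then a
formal consequence: `f ω ≤ sup f(S)` for `f = g ∘ Φ` reads `g (Φ ω) ≤ sup g(Φ(S))`.
-/

section Pullback

variable {X Y : Type} (φ : X → Y)

def clConv (K : Set (X → EReal)) (S : Set X) : Set X :=
  {x | ∀ g ∈ K, g x ≤ ⨆ s ∈ S, g s}

lemma genCLC_isCLC (B : Set (X → ℝ)) : IsCLC (genCLC B) :=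
  ⟨fun f hf g hg α β hα hβ K hK => hK.1.1 f (hf K hK) g (hg K hK) α β hα hβ,
    fun ι F hF K hK => hK.1.2 ι F fun i => hF i K hK⟩

lemma genCLC_subset {B : Set (X → ℝ)} {K : Set (X → EReal)} (hK : IsCLC K)
    (hB : ∀ b ∈ B, (fun x => ((b x : ℝ) : EReal)) ∈ K) : genCLC B ⊆ K :=
  fun _ hf => hf K ⟨hK, hB⟩

lemma coe_mem_genCLC {B : Set (X → ℝ)} {b : X → ℝ} (hb : b ∈ B) :
    (fun x => ((b x : ℝ) : EReal)) ∈ genCLC B :=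
  fun _ hK => hK.2 b hb

lemma IsCLC.image_comp {K : Set (Y → EReal)} (hK : IsCLC K) : IsCLC ((· ∘ φ) '' K) := by
  refine ⟨?_, fun ι F hF => ?_⟩
  · rintro _ ⟨f, hf, rfl⟩ _ ⟨g, hg, rfl⟩ α β hα hβ
    exact ⟨_, hK.1 f hf g hg α β hα hβ, rfl⟩
  · choose G hG hGF using hF
    exact ⟨fun y => ⨆ i, G i y, hK.2 ι G hG,
      funext fun x => iSup_congr fun i => congrFun (hGF i) x⟩

lemma IsCLC.preimage_comp {K : Set (X → EReal)} (hK : IsCLC K) :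
    IsCLC ((· ∘ φ) ⁻¹' K) :=
  ⟨fun _ hf _ hg α β hα hβ => hK.1 _ hf _ hg α β hα hβ, fun ι _ hF => hK.2 ι _ hF⟩

lemma genCLC_image_comp (B : Set (Y → ℝ)) :
    genCLC ((· ∘ φ) '' B) = (· ∘ φ) '' genCLC B := by
  apply (genCLC_subset ((genCLC_isCLC B).image_comp φ) _).antisymm
  · rintro _ ⟨g, hg, rfl⟩
    refine genCLC_subset (K := (· ∘ φ) ⁻¹' genCLC ((· ∘ φ) '' B))
      ((genCLC_isCLC _).preimage_comp φ) ?_ hg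
    intro b hb
    exact coe_mem_genCLC (mem_image_of_mem _ hb)
  · rintro _ ⟨b, hb, rfl⟩
    exact ⟨_, coe_mem_genCLC hb, rfl⟩

lemma clConv_image_comp (K : Set (Y → EReal)) (S : Set X) :
    clConv ((· ∘ φ) '' K) S = φ ⁻¹' clConv K (φ '' S) := by
  ext x
  simp only [clConv, mem_ofPred_eq, mem_preimage, forall_mem_image, iSup_image,
    Function.comp_apply]

end Pullback

theorem stmt19_general {Ω : Type} [TopologicalSpace Ω]
    (A : Submodule ℝ C(Ω, ℝ))
    (A' : Set (Ω → ℝ)) (hA' : A' = {g | ∃ a : A, g = fun ω => (a : C(Ω, ℝ)) ω})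
    (evals : Set ((A →L[ℝ] ℝ) → ℝ))
    (hevals : evals = {g | ∃ a : A, g = fun h => h a}) :
    (∀ f ∈ genCLC A', ∃ g ∈ genCLC evals, ∀ ω : Ω, g (PhiMap A ω) = f ω) ∧
    ∀ S : Set Ω,
      {ω | ∀ f ∈ genCLC A', f ω ≤ ⨆ s ∈ S, f s}
        = (fun ω => PhiMap A ω) ⁻¹'
            {h | ∀ g ∈ genCLC evals, g h ≤ ⨆ d ∈ (PhiMap A) '' S, g d} := by
  have hpull : A' = (· ∘ PhiMap A) '' evals := by
    subst hA' hevals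
    ext g
    constructor
    · rintro ⟨a, rfl⟩
      exact ⟨_, ⟨a, rfl⟩, rfl⟩
    · rintro ⟨_, ⟨a, rfl⟩, rfl⟩
      exact ⟨a, rfl⟩
  rw [hpull, genCLC_image_comp]
  refine ⟨?_, fun S => clConv_image_comp (PhiMap A) _ S⟩
  rintro _ ⟨g, hg, rfl⟩
  exact ⟨g, hg, fun _ => rfl⟩

/-- Every `f` in the complete lattice cone `ℱ` generated by `𝒜` extends along
`Φ` to a member of the complete lattice cone `G` on `𝒜*` generated by the
evaluation functionals, and consequently `clConv_ℱ S = Φ⁻¹(clConv_G Φ(S))`. -/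
theorem stmt19 {Ω : Type} [TopologicalSpace Ω] [T2Space Ω] [SigmaCompactSpace Ω]
    [WeaklyLocallyCompactSpace Ω]
    (A : Submodule ℝ C(Ω, ℝ))
    (hsep : ∀ ω₁ ω₂ : Ω, ω₁ ≠ ω₂ → ∃ a ∈ A, a ω₁ ≠ a ω₂)
    (A' : Set (Ω → ℝ)) (hA' : A' = {g | ∃ a : A, g = fun ω => (a : C(Ω, ℝ)) ω})
    (evals : Set ((A →L[ℝ] ℝ) → ℝ))
    (hevals : evals = {g | ∃ a : A, g = fun h => h a}) :
    (∀ f ∈ genCLC A', ∃ g ∈ genCLC evals, ∀ ω : Ω, g (PhiMap A ω) = f ω) ∧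
    ∀ S : Set Ω,
      {ω | ∀ f ∈ genCLC A', f ω ≤ ⨆ s ∈ S, f s}
        = (fun ω => PhiMap A ω) ⁻¹'
            {h | ∀ g ∈ genCLC evals, g h ≤ ⨆ d ∈ (PhiMap A) '' S, g d} :=
  stmt19_general A A' hA' evals hevals
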